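/- (Ostrowski–Taussky) If A is an n×n complex matrix with Re A positive definite, then det(Re A) ≤ |det A|. -/

import Mathlib

/-!
Write `A = H + i K` with `H = Re A` positive definite and `K` Hermitian. Conjugating by
`R = √H` gives `A = R (1 + i S) R` with `S = R⁻¹ K R⁻¹` Hermitian, so
`det A = det H · ∏ (1 + i λⱼ)` over the real eigenvalues `λⱼ` of `S`, and each factor has
modulus `√(1 + λⱼ²) ≥ 1`.
-/

open Matrix ComplexOrder

/-- The Hermitian real part `(A + Aᴴ)/2` of a complex matrix. -/
noncomputable def matRe {n : ℕ} (A : Matrix (Fin n) (Fin n) ℂ) : Matrix (Fin n) (Fin n) ℂ :=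
  (1 / 2 : ℂ) • (A + Aᴴ)

noncomputable def matIm {n : ℕ} (A : Matrix (Fin n) (Fin n) ℂ) : Matrix (Fin n) (Fin n) ℂ :=
  (2 * Complex.I)⁻¹ • (A - Aᴴ)

lemma isHermitian_matIm {n : ℕ} (A : Matrix (Fin n) (Fin n) ℂ) : (matIm A).IsHermitian := by
  have hstar : star (2 * Complex.I)⁻¹ = -(2 * Complex.I)⁻¹ := by
    simp [star_mul', Complex.conj_I]
  rw [IsHermitian, matIm, conjTranspose_smul, conjTranspose_sub, conjTranspose_conjTranspose,
    hstar]
  module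

lemma matRe_add_I_smul_matIm {n : ℕ} (A : Matrix (Fin n) (Fin n) ℂ) :
    matRe A + Complex.I • matIm A = A := by
  have hI : Complex.I * (2 * Complex.I)⁻¹ = 1 / 2 := by field_simp
  rw [matRe, matIm, smul_smul, hI]
  module

namespace Matrix

variable {ι : Type*} [Fintype ι] [DecidableEq ι]

lemma IsHermitian.one_le_norm_det_one_add_I_smul {S : Matrix ι ι ℂ} (hS : S.IsHermitian) :
    1 ≤ ‖det (1 + Complex.I • S)‖ := by
  have hscalar : 1 + Complex.I • S = (-Complex.I) • (scalar ι Complex.I - S) := by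
    rw [scalar_apply, ← smul_one_eq_diagonal, smul_sub, smul_smul, neg_mul, Complex.I_mul_I,
      neg_neg, one_smul, neg_smul, sub_neg_eq_add]
  rw [hscalar, det_smul, ← eval_charpoly, hS.charpoly_eq, Polynomial.eval_prod, norm_mul,
    norm_pow, norm_neg, Complex.norm_I, one_pow, one_mul, norm_prod]
  refine Finset.one_le_prod fun i _ => ?_
  simpa using Complex.abs_im_le_norm (Complex.I - hS.eigenvalues i)

open scoped MatrixOrder in
lemma PosDef.exists_det_add_I_smul_eq {H K : Matrix ι ι ℂ} (hH : H.PosDef)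
    (hK : K.IsHermitian) :
    ∃ S : Matrix ι ι ℂ, S.IsHermitian ∧
      det (H + Complex.I • K) = det H * det (1 + Complex.I • S) := by
  set R := CFC.sqrt H
  have hRR : R * R = H := CFC.sqrt_mul_sqrt_self H hH.posSemidef.nonneg
  have hR : R.IsHermitian := (CFC.sqrt_nonneg H).posSemidef.isHermitian
  have hRdet : IsUnit R.det := (isUnit_iff_isUnit_det R).1 <|
    (CFC.isUnit_sqrt_iff H hH.posSemidef.nonneg).2 hH.isUnit
  refine ⟨R⁻¹ * K * R⁻¹, ?_, ?_⟩
  · rw [IsHermitian, conjTranspose_mul, conjTranspose_mul, hK.eq, hR.inv.eq, mul_assoc]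
  · have hconj : R * (R⁻¹ * K * R⁻¹) * R = K := by
      rw [← mul_assoc, ← mul_assoc, mul_nonsing_inv _ hRdet, one_mul, mul_assoc,
        nonsing_inv_mul _ hRdet, mul_one]
    have hfactor : H + Complex.I • K = R * (1 + Complex.I • (R⁻¹ * K * R⁻¹)) * R := by
      rw [mul_add, add_mul, mul_one, hRR, Matrix.mul_smul, Matrix.smul_mul, hconj]
    rw [hfactor, det_mul, det_mul, ← hRR, det_mul]
    ring

lemma PosDef.re_det_le_norm_det_add_I_smul {H K : Matrix ι ι ℂ} (hH : H.PosDef)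
    (hK : K.IsHermitian) :
    (det H).re ≤ ‖det (H + Complex.I • K)‖ := by
  obtain ⟨S, hS, hdet⟩ := hH.exists_det_add_I_smul_eq hK
  rw [hdet, norm_mul, Complex.re_eq_norm.2 hH.det_pos.le]
  exact le_mul_of_one_le_right (norm_nonneg _) hS.one_le_norm_det_one_add_I_smul

end Matrix

/-- Ostrowski–Taussky inequality. -/
theorem ostrowski_taussky {n : ℕ} (A : Matrix (Fin n) (Fin n) ℂ)
    (hA : (matRe A).PosDef) :
    (matRe A).det.re ≤ ‖A.det‖ := by
  simpa only [matRe_add_I_smul_matIm] using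
    hA.re_det_le_norm_det_add_I_smul (isHermitian_matIm A)
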